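/- arXiv:1009.0695 — 3 statements merged into one kernel-verified Lean document; each statement's English description precedes it below -/
import Mathlib

section
/- Let η > 0 and let Δ : ℝ → ℝ be a continuously differentiable function with |Δ(x)| ≤ 1 for all x, Δ(x) → 0 as |x| → ∞, and such that e := sup_{x ∈ ℝ} |Δ(x)| satisfies |Δ′(x)| ≤ e/η for all x. Then sup_{x ∈ ℝ} |(Δ * χ_η)(x)| ≥ e/5, where * denotes convolution. -/
/-!
Let `x₀` be a point where `|Δ|` attains its supremum `e` (it exists since `Δ` is continuous and
vanishes at infinity); replacing `Δ` by `-Δ` we may assume `Δ x₀ = e`. The derivative bound gives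
`Δ (x₀ - t) ≥ e (1 - |t| / η)`, so the integrand of `(Δ * χ_η)(x₀)` is nonnegative and at least
`(e / 2) χ_η` on `|t| ≤ η / 2`. Since `exp (-1 / (1 - x²))` decreases in `|x|` on `(-1, 1)`, the
middle half `[-1/2, 1/2]` carries at least half of its mass, hence `(Δ * χ_η)(x₀) ≥ e / 4`.
-/

open MeasureTheory Filter

/-- The normalization constant `g = ∫_{-1}^{1} exp(-1/(1-x²)) dx`. -/
noncomputable def bumpNorm : ℝ := ∫ x in (-1 : ℝ)..1, Real.exp (-1 / (1 - x ^ 2))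

/-- The smooth bump `χ_η`, a probability density supported in `(-η, η)`. -/
noncomputable def chiBump (η : ℝ) (x : ℝ) : ℝ :=
  if |x| < η then (1 / (bumpNorm * η)) * Real.exp (-1 / (1 - (x / η) ^ 2)) else 0

open Set

noncomputable def bumpProfile (x : ℝ) : ℝ := Real.exp (-1 / (1 - x ^ 2))

lemma bumpProfile_le_one {x : ℝ} (hx : x ^ 2 ≤ 1) : bumpProfile x ≤ 1 :=
  Real.exp_le_one_iff.2 (div_nonpos_of_nonpos_of_nonneg (by norm_num) (by linarith))

-- `x ^ 2 < 1` is needed: at `x = ±1` the junk value `-1 / 0 = 0` makes `bumpProfile x = 1`.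
lemma bumpProfile_le_of_sq_le {x y : ℝ} (hxy : y ^ 2 ≤ x ^ 2) (hx : x ^ 2 < 1) :
    bumpProfile x ≤ bumpProfile y := by
  refine Real.exp_le_exp.2 ?_
  rw [neg_div, neg_div, neg_le_neg_iff]
  exact one_div_le_one_div_of_le (by linarith) (by linarith)

lemma integrableOn_bumpProfile : IntegrableOn bumpProfile (Icc (-1) 1) := by
  refine Measure.integrableOn_of_bounded (M := 1) measure_Icc_lt_top.ne
    (Measurable.aestronglyMeasurable (by unfold bumpProfile; fun_prop)) ?_
  filter_upwards [ae_restrict_mem measurableSet_Icc] with x hx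
  exact (Real.norm_of_nonneg (Real.exp_nonneg _)).trans_le
    (bumpProfile_le_one (by nlinarith [hx.1, hx.2]))

lemma intervalIntegrable_bumpProfile {a b : ℝ} (ha : a ∈ Icc (-1) 1) (hb : b ∈ Icc (-1) 1) :
    IntervalIntegrable bumpProfile volume a b :=
  (integrableOn_bumpProfile.mono_set (uIcc_subset_Icc ha hb)).intervalIntegrable

lemma bumpNorm_le_two_mul_integral :
    bumpNorm ≤ 2 * ∫ x in -(1 / 2)..1 / 2, bumpProfile x := by
  have hI {a b : ℝ} (ha : a ∈ Icc (-1) 1) (hb : b ∈ Icc (-1) 1) :=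
    intervalIntegrable_bumpProfile ha hb
  set c := bumpProfile (1 / 2)
  have hsplit : bumpNorm = (∫ x in -1..-(1 / 2), bumpProfile x) +
      (∫ x in -(1 / 2)..1 / 2, bumpProfile x) + ∫ x in 1 / 2..1, bumpProfile x := by
    rw [intervalIntegral.integral_add_adjacent_intervals (hI (by norm_num) (by norm_num))
        (hI (by norm_num) (by norm_num)),
      intervalIntegral.integral_add_adjacent_intervals (hI (by norm_num) (by norm_num))
        (hI (by norm_num) (by norm_num))]
    rfl
  have hmid : c ≤ ∫ x in -(1 / 2)..1 / 2, bumpProfile x := by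
    have h (x : ℝ) (hx : x ∈ Icc (-(1 / 2)) (1 / 2)) : c ≤ bumpProfile x :=
      bumpProfile_le_of_sq_le (by nlinarith [hx.1, hx.2]) (by norm_num)
    have := intervalIntegral.integral_mono_on (by norm_num) intervalIntegrable_const
      (hI (by norm_num) (by norm_num)) h
    norm_num at this ⊢
    linarith
  have hleft : ∫ x in -1..-(1 / 2), bumpProfile x ≤ c / 2 := by
    have h (x : ℝ) (hx : x ∈ Ioo (-1) (-(1 / 2))) : bumpProfile x ≤ c :=
      bumpProfile_le_of_sq_le (by nlinarith [hx.1, hx.2]) (by nlinarith [hx.1, hx.2])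
    have := intervalIntegral.integral_mono_on_of_le_Ioo (by norm_num)
      (hI (by norm_num) (by norm_num)) intervalIntegrable_const h
    norm_num at this ⊢
    linarith
  have hright : ∫ x in 1 / 2..1, bumpProfile x ≤ c / 2 := by
    have h (x : ℝ) (hx : x ∈ Ioo (1 / 2) 1) : bumpProfile x ≤ c :=
      bumpProfile_le_of_sq_le (by nlinarith [hx.1, hx.2]) (by nlinarith [hx.1, hx.2])
    have := intervalIntegral.integral_mono_on_of_le_Ioo (by norm_num)
      (hI (by norm_num) (by norm_num)) intervalIntegrable_const h
    norm_num at this ⊢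
    linarith
  linarith

lemma bumpNorm_pos : 0 < bumpNorm :=
  intervalIntegral.intervalIntegral_pos_of_pos_on
    (intervalIntegrable_bumpProfile (by norm_num) (by norm_num)) (fun _ _ => Real.exp_pos _)
    (by norm_num)

lemma chiBump_of_abs_lt {η t : ℝ} (h : |t| < η) :
    chiBump η t = 1 / (bumpNorm * η) * bumpProfile (t / η) :=
  if_pos h

lemma chiBump_of_le_abs {η t : ℝ} (h : η ≤ |t|) : chiBump η t = 0 :=
  if_neg h.not_gt

lemma chiBump_nonneg (η t : ℝ) : 0 ≤ chiBump η t := by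
  rcases lt_or_ge |t| η with h | h
  · have := bumpNorm_pos
    have : 0 < η := (abs_nonneg t).trans_lt h
    rw [chiBump_of_abs_lt h]
    exact mul_nonneg (by positivity) (Real.exp_nonneg _)
  · exact (chiBump_of_le_abs h).ge

lemma intervalIntegral_chiBump {η c : ℝ} (hη : 0 < η) (hc₀ : 0 ≤ c) (hc₁ : c ≤ 1) :
    ∫ t in -(c * η)..c * η, chiBump η t = (∫ x in -c..c, bumpProfile x) / bumpNorm := by
  have hcη : c * η ≤ η := by nlinarith
  rw [intervalIntegral.integral_congr_Ioo_of_le (by nlinarith) fun t ht =>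
      chiBump_of_abs_lt (abs_lt.2 ⟨by linarith [ht.1], by linarith [ht.2]⟩),
    intervalIntegral.integral_const_mul, intervalIntegral.integral_comp_div _ hη.ne',
    neg_div, mul_div_cancel_right₀ _ hη.ne', smul_eq_mul]
  have := bumpNorm_pos
  field_simp

lemma integral_chiBump {η : ℝ} (hη : 0 < η) : ∫ t, chiBump η t = 1 := by
  have hsupp : Function.support (chiBump η) ⊆ Ioc (-(1 * η)) (1 * η) := fun t ht =>
    have h : |t| < η := not_le.1 fun h => ht (chiBump_of_le_abs h)
    ⟨by linarith [neg_abs_le t], by linarith [le_abs_self t]⟩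
  rw [← intervalIntegral.integral_eq_integral_of_support_subset hsupp,
    intervalIntegral_chiBump hη zero_le_one le_rfl]
  exact div_self bumpNorm_pos.ne'

lemma integrable_chiBump {η : ℝ} (hη : 0 < η) : Integrable (chiBump η) :=
  Integrable.of_integral_ne_zero (by rw [integral_chiBump hη]; exact one_ne_zero)

lemma one_half_le_intervalIntegral_chiBump {η : ℝ} (hη : 0 < η) :
    1 / 2 ≤ ∫ t in -(η / 2)..η / 2, chiBump η t := by
  have := intervalIntegral_chiBump hη (c := 1 / 2) (by norm_num) (by norm_num)
  rw [one_div_mul_eq_div] at this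
  rw [this, le_div_iff₀ bumpNorm_pos]
  linarith [bumpNorm_le_two_mul_integral]

section Convolution

variable {f : ℝ → ℝ} {η : ℝ}

lemma integrable_mul_chiBump (hη : 0 < η) (hf : Continuous f) {C : ℝ} (hC : ∀ y, |f y| ≤ C)
    (x : ℝ) : Integrable (fun t => f (x - t) * chiBump η t) :=
  (integrable_chiBump hη).bdd_mul (hf.comp (continuous_sub_left x)).aestronglyMeasurable
    (ae_of_all _ fun t => hC (x - t))

lemma abs_integral_mul_chiBump_le (hη : 0 < η) {C : ℝ} (hC : ∀ y, |f y| ≤ C) (x : ℝ) :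
    |∫ t, f (x - t) * chiBump η t| ≤ C := by
  have := norm_integral_le_of_norm_le (f := fun t => f (x - t) * chiBump η t)
    ((integrable_chiBump hη).const_mul C) <| ae_of_all _ fun t => by
    rw [Real.norm_eq_abs, abs_mul, abs_of_nonneg (chiBump_nonneg η t)]
    exact mul_le_mul_of_nonneg_right (hC (x - t)) (chiBump_nonneg η t)
  rwa [integral_const_mul, integral_chiBump hη, mul_one] at this

lemma div_four_le_integral_mul_chiBump (hη : 0 < η) {x₀ : ℝ} (hx₀ : 0 ≤ f x₀)
    (hint : Integrable (fun t => f (x₀ - t) * chiBump η t))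
    (hlip : ∀ y, |f y - f x₀| ≤ f x₀ / η * |y - x₀|) :
    f x₀ / 4 ≤ ∫ t, f (x₀ - t) * chiBump η t := by
  set e := f x₀
  have hlow (t : ℝ) : e * (1 - |t| / η) ≤ f (x₀ - t) := by
    have := (abs_le.1 (hlip (x₀ - t))).1
    rw [sub_sub_cancel_left, abs_neg] at this
    linarith [show e / η * |t| = e * (|t| / η) by ring]
  set I := Ioc (-(η / 2)) (η / 2)
  have hle (t : ℝ) :
      I.indicator (fun t => e / 2 * chiBump η t) t ≤ f (x₀ - t) * chiBump η t := by
    by_cases ht : t ∈ I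
    · rw [indicator_of_mem ht]
      refine mul_le_mul_of_nonneg_right (le_trans ?_ (hlow t)) (chiBump_nonneg η t)
      have : |t| / η ≤ 1 / 2 := by
        rw [div_le_iff₀ hη, abs_le]; constructor <;> linarith [ht.1, ht.2]
      nlinarith
    · rw [indicator_of_notMem ht]
      rcases lt_or_ge |t| η with h | h
      · refine mul_nonneg ((mul_nonneg hx₀ ?_).trans (hlow t)) (chiBump_nonneg η t)
        rw [sub_nonneg, div_le_one hη]; exact h.le
      · rw [chiBump_of_le_abs h, mul_zero]
  calc e / 4 = e / 2 * (1 / 2) := by ring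
    _ ≤ e / 2 * ∫ t in -(η / 2)..η / 2, chiBump η t :=
        mul_le_mul_of_nonneg_left (one_half_le_intervalIntegral_chiBump hη) (by positivity)
    _ = ∫ t, I.indicator (fun t => e / 2 * chiBump η t) t := by
        rw [integral_indicator measurableSet_Ioc, integral_const_mul,
          intervalIntegral.integral_of_le (by linarith)]
    _ ≤ ∫ t, f (x₀ - t) * chiBump η t :=
        integral_mono (((integrable_chiBump hη).const_mul _).indicator measurableSet_Ioc) hint hle

lemma abs_div_four_le_abs_integral_mul_chiBump (hη : 0 < η) {x₀ : ℝ}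
    (hint : Integrable (fun t => f (x₀ - t) * chiBump η t))
    (hlip : ∀ y, |f y - f x₀| ≤ |f x₀| / η * |y - x₀|) :
    |f x₀| / 4 ≤ |∫ t, f (x₀ - t) * chiBump η t| := by
  rcases le_total 0 (f x₀) with h | h
  · rw [abs_of_nonneg h] at hlip ⊢
    exact (div_four_le_integral_mul_chiBump hη h hint hlip).trans (le_abs_self _)
  · have := div_four_le_integral_mul_chiBump (f := -f) hη (neg_nonneg.2 h)
      (by simpa using hint.neg)
      (fun y => by simpa [abs_of_nonpos h, abs_sub_comm, ← sub_eq_neg_add] using hlip y)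
    simp only [Pi.neg_apply, neg_mul, integral_neg] at this
    rw [abs_of_nonpos h]
    exact this.trans (neg_le_abs _)

end Convolution

theorem Continuous.exists_forall_abs_le_of_tendsto_zero {X : Type*} [TopologicalSpace X]
    [Nonempty X] {f : X → ℝ} (hf : Continuous f) (hlim : Tendsto f (cocompact X) (nhds 0)) :
    ∃ x₀, ∀ y, |f y| ≤ |f x₀| := by
  by_cases h : ∃ x₁, f x₁ ≠ 0
  · obtain ⟨x₁, hx₁⟩ := h
    have hev : ∀ᶠ x in cocompact X, |f x| ≤ |f x₁| := by
      simpa using (hlim.abs.eventually_lt_const (by simpa using abs_pos.2 hx₁)).mono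
        fun _ h => h.le
    exact hf.abs.exists_forall_ge' x₁ hev
  · simp only [not_exists, not_not] at h
    exact ⟨Classical.arbitrary X, fun y => by simp [h]⟩

theorem statement5_general (η : ℝ) (hη : 0 < η) (Δ : ℝ → ℝ)
    (hC1 : ContDiff ℝ 1 Δ)
    (hlim : Filter.Tendsto Δ (Filter.cocompact ℝ) (nhds 0))
    (e : ℝ) (he : e = ⨆ x : ℝ, |Δ x|)
    (hder : ∀ x, |deriv Δ x| ≤ e / η) :
    e / 5 ≤ ⨆ x : ℝ, |∫ t : ℝ, Δ (x - t) * chiBump η t| := by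
  obtain ⟨x₀, hx₀⟩ := hC1.continuous.exists_forall_abs_le_of_tendsto_zero hlim
  have hbdd : BddAbove (range fun x => |Δ x|) := ⟨_, forall_mem_range.2 hx₀⟩
  obtain rfl : e = |Δ x₀| := he.trans (le_antisymm (ciSup_le hx₀) (le_ciSup hbdd x₀))
  have hlip (y : ℝ) : |Δ y - Δ x₀| ≤ |Δ x₀| / η * |y - x₀| :=
    convex_univ.norm_image_sub_le_of_norm_deriv_le
      (fun x _ => (hC1.differentiable one_ne_zero).differentiableAt) (fun x _ => hder x)
      (mem_univ x₀) (mem_univ y)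
  have hconv_bdd : BddAbove (range fun x => |∫ t, Δ (x - t) * chiBump η t|) :=
    ⟨_, forall_mem_range.2 (abs_integral_mul_chiBump_le hη hx₀)⟩
  calc |Δ x₀| / 5 ≤ |Δ x₀| / 4 := by gcongr; norm_num
    _ ≤ |∫ t, Δ (x₀ - t) * chiBump η t| :=
        abs_div_four_le_abs_integral_mul_chiBump hη
          (integrable_mul_chiBump hη hC1.continuous hx₀ x₀) hlip
    _ ≤ _ := le_ciSup hconv_bdd x₀

/-- Lemma 3 of the paper, smoothing inequality: if `|Δ| ≤ 1`,
`Δ → 0` at infinity, `e = sup |Δ|` and `|Δ'| ≤ e/η`, then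
`sup |Δ * χ_η| ≥ e/5`. -/
theorem statement5 (η : ℝ) (hη : 0 < η) (Δ : ℝ → ℝ)
    (hC1 : ContDiff ℝ 1 Δ)
    (hbd : ∀ x, |Δ x| ≤ 1)
    (hlim : Filter.Tendsto Δ (Filter.cocompact ℝ) (nhds 0))
    (e : ℝ) (he : e = ⨆ x : ℝ, |Δ x|)
    (hder : ∀ x, |deriv Δ x| ≤ e / η) :
    e / 5 ≤ ⨆ x : ℝ, |∫ t : ℝ, Δ (x - t) * chiBump η t| :=
  statement5_general η hη Δ hC1 hlim e he hder
end

section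
/- Let N ≥ 1 and let m be an integer with 0 ≤ m ≤ N. Then ∫_{U(N)} |tr U|^{2m} dμ_H(U) = m!. -/
open MeasureTheory Matrix Filter

/-- The (pi-type) measurable structure on complex `N × N` matrices. -/
noncomputable instance matMS (N : ℕ) : MeasurableSpace (Matrix (Fin N) (Fin N) ℂ) :=
  inferInstanceAs (MeasurableSpace ((Fin N) → (Fin N) → ℂ))

/-- `X_N = Re (tr (A U)) / σ`, the normalized real part of `tr (A U)`. -/
noncomputable def XN {N : ℕ} (A : Matrix (Fin N) (Fin N) ℂ) (σ : ℝ)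
    (U : Matrix.unitaryGroup (Fin N) ℂ) : ℝ :=
  (Matrix.trace (A * (U : Matrix (Fin N) (Fin N) ℂ))).re / σ

/-- The standard normal distribution function `Φ`. -/
noncomputable def stdGaussCDF (x : ℝ) : ℝ :=
  ∫ t in Set.Iic x, Real.exp (-t ^ 2 / 2) / Real.sqrt (2 * Real.pi)

/-- The standard normal density `φ`. -/
noncomputable def stdGaussPDF (x : ℝ) : ℝ :=
  Real.exp (-x ^ 2 / 2) / Real.sqrt (2 * Real.pi)

/-- The characteristic function `ψ_N(ξ) = E[exp(i ξ X_N)]`. -/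
noncomputable def charFn {N : ℕ} (A : Matrix (Fin N) (Fin N) ℂ) (σ : ℝ)
    (μ : Measure (Matrix.unitaryGroup (Fin N) ℂ)) (ξ : ℝ) : ℂ :=
  ∫ U, Complex.exp (Complex.I * (ξ : ℂ) * ((XN A σ U : ℝ) : ℂ)) ∂μ

/-!
Let `μ` be a Haar probability measure on a group `G` and `T` a unitary matrix representation of `G`.
Averaging `g ↦ conj (T g) ⊗ T g`, which acts on matrices by `X ↦ T g * X * (T g)ᴴ`, gives the
projection onto the matrices commuting with every `T g`; taking traces,
`∫ |tr T g|² dμ = dim (commutant of T)`.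

For `T U = U^{⊗m}` the commutant is spanned by the `m!` permutations of the tensor factors,
which are linearly independent when `m ≤ N`. For the spanning part, a matrix `X` commuting with all `U^{⊗m}`
also commutes with `A^{⊗m}` for every matrix `A` (diagonal unitaries, then Hermitian matrices by the
spectral theorem, then all matrices via a polynomial in one complex variable vanishing on a line).
Taking for `A` the 0/1 matrices of maps `Fin N → Fin N` shows that `X` is determined by the entries
`X e (e ∘ σ)`, `e` the inclusion `Fin m ↪ Fin N` and `σ` a permutation.
-/

open Finset
open scoped Kronecker

namespace Matrix

section TensorPow

variable {n R : Type*}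

def tensorPow [CommSemiring R] (m : ℕ) (A : Matrix n n R) : Matrix (Fin m → n) (Fin m → n) R :=
  of fun a b => ∏ k, A (a k) (b k)

variable [CommSemiring R] {m : ℕ}

@[simp]
theorem tensorPow_apply (A : Matrix n n R) (a b : Fin m → n) :
    tensorPow m A a b = ∏ k, A (a k) (b k) := rfl

theorem tensorPow_submatrix (A : Matrix n n R) (f g : n → n) :
    tensorPow m (A.submatrix f g) = (tensorPow m A).submatrix (f ∘ ·) (g ∘ ·) := rfl

theorem tensorPow_map {S : Type*} [CommSemiring S] (f : R →+* S) (A : Matrix n n R) :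
    (tensorPow m A).map f = tensorPow m (A.map f) := by
  ext a b
  simp

theorem conjTranspose_tensorPow [StarRing R] (A : Matrix n n R) :
    (tensorPow m A)ᴴ = tensorPow m Aᴴ := by
  ext a b
  simp

theorem tensorPow_diagonal [DecidableEq n] (d : n → R) :
    tensorPow m (diagonal d) = diagonal fun a : Fin m → n => ∏ k, d (a k) := by
  ext a b
  rw [tensorPow_apply, diagonal_apply]
  split_ifs with h
  · simp [h]
  · obtain ⟨k, hk⟩ := Function.ne_iff.mp h
    exact prod_eq_zero (mem_univ k) (diagonal_apply_ne d hk)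

theorem tensorPow_one [DecidableEq n] : tensorPow m (1 : Matrix n n R) = 1 := by
  simpa using tensorPow_diagonal (m := m) (fun _ : n => (1 : R))

variable [Fintype n]

theorem tensorPow_mul (A B : Matrix n n R) :
    tensorPow m (A * B) = tensorPow m A * tensorPow m B := by
  ext a c
  simp only [tensorPow_apply, mul_apply, Fintype.prod_sum, prod_mul_distrib]

theorem trace_tensorPow (A : Matrix n n R) : trace (tensorPow m A) = trace A ^ m := by
  simp only [trace, Fintype.sum_pow, diag_apply, tensorPow_apply]

variable [DecidableEq n]

variable (m) in
def tensorPowHom : Matrix n n R →* Matrix (Fin m → n) (Fin m → n) R where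
  toFun := tensorPow m
  map_one' := tensorPow_one
  map_mul' := tensorPow_mul

theorem commute_tensorPow_permMatrix (A : Matrix n n R) (π : Equiv.Perm (Fin m)) :
    Commute (tensorPow m A)
      (Equiv.Perm.permMatrix R (Equiv.arrowCongr π.symm (Equiv.refl n))) := by
  rw [Commute, SemiconjBy, Equiv.Perm.permMatrix, PEquiv.mul_toMatrix_toPEquiv,
    PEquiv.toMatrix_toPEquiv_mul]
  ext a b
  simpa using Equiv.prod_comp π.symm fun k => A (a (π k)) (b k)

end TensorPow

theorem tensorPow_mem_unitaryGroup {n R : Type*} [Fintype n] [DecidableEq n] [CommRing R]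
    [StarRing R] {m : ℕ} {U : Matrix n n R} (hU : U ∈ unitaryGroup n R) :
    tensorPow m U ∈ unitaryGroup (Fin m → n) R := by
  rw [mem_unitaryGroup_iff, star_eq_conjTranspose, conjTranspose_tensorPow, ← tensorPow_mul,
    ← star_eq_conjTranspose, mem_unitaryGroup_iff.mp hU, tensorPow_one]

end Matrix

theorem Function.Embedding.exists_perm_eq_comp_of_card_fiber_eq {ι n : Type*} [Fintype ι]
    [DecidableEq n] (e : ι ↪ n) (c : ι → n) (h : ∀ j, #{k | c k = j} = #{k | e k = j}) :
    ∃ σ : Equiv.Perm ι, c = e ∘ σ := by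
  have hrange (k : ι) : ∃ k', e k' = c k := by
    have : 0 < #{k' | e k' = c k} := h (c k) ▸ card_pos.mpr ⟨k, by simp⟩
    obtain ⟨k', hk'⟩ := card_pos.mp this
    exact ⟨k', (mem_filter.mp hk').2⟩
  choose σ hσ using hrange
  have hinj : Function.Injective σ := fun k₁ k₂ h₁₂ => by
    have hle : #{k | c k = c k₁} ≤ 1 :=
      h (c k₁) ▸ card_le_one.mpr fun a ha b hb => e.injective (by simp_all)
    exact card_le_one.mp hle k₁ (by simp) k₂ (by simp [← hσ, h₁₂])
  exact ⟨Equiv.ofBijective σ (Finite.injective_iff_bijective.mp hinj),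
    funext fun k => (hσ k).symm⟩

namespace Matrix

section Commutant

variable {n : Type*} [Fintype n] [DecidableEq n] {m : ℕ} {X : Matrix (Fin m → n) (Fin m → n) ℂ}

theorem apply_eq_zero_of_card_fiber_ne
    (hX : ∀ U ∈ unitaryGroup n ℂ, Commute (tensorPow m U) X) {a b : Fin m → n} {j : n}
    (hab : #{k | a k = j} ≠ #{k | b k = j}) : X a b = 0 := by
  -- a primitive `(m + 1)`-th root of unity separates the exponents `0, …, m`
  set ζ := Complex.exp (2 * Real.pi * Complex.I / (m + 1 : ℕ))
  have hζ : IsPrimitiveRoot ζ (m + 1) := Complex.isPrimitiveRoot_exp _ m.succ_ne_zero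
  set d : n → ℂ := fun i => if i = j then ζ else 1
  have hd : diagonal d ∈ unitaryGroup n ℂ := by
    have hζ1 : ζ * starRingEnd ℂ ζ = 1 := by
      rw [Complex.mul_conj, Complex.normSq_eq_norm_sq, hζ.norm'_eq_one m.succ_ne_zero]
      norm_num
    rw [mem_unitaryGroup_iff, star_eq_conjTranspose, diagonal_conjTranspose,
      diagonal_mul_diagonal, ← diagonal_one]
    congr 1
    ext i
    by_cases hi : i = j <;> simp [d, hi, hζ1]
  have hprod (c : Fin m → n) : ∏ k, d (c k) = ζ ^ #{k | c k = j} := by simp [d, prod_ite]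
  have hcard (c : Fin m → n) : #{k | c k = j} < m + 1 :=
    Nat.lt_succ_of_le ((card_filter_le _ _).trans (by simp))
  have hcomm := congr_fun₂ (hX _ hd).eq a b
  rw [tensorPow_diagonal, diagonal_mul, mul_diagonal, hprod, hprod, mul_comm] at hcomm
  by_contra hX0
  exact hab (hζ.pow_inj (hcard a) (hcard b) (mul_left_cancel₀ hX0 hcomm))

theorem commute_tensorPow_diagonal (hX : ∀ U ∈ unitaryGroup n ℂ, Commute (tensorPow m U) X)
    (d : n → ℂ) : Commute (tensorPow m (diagonal d)) X := by
  have hprod (c : Fin m → n) : ∏ k, d (c k) = ∏ j, d j ^ #{k | c k = j} := by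
    simp_rw [← prod_fiberwise' univ c d, prod_const]
  ext a b
  rw [tensorPow_diagonal, diagonal_mul, mul_diagonal]
  by_cases hab : ∀ j, #{k | a k = j} = #{k | b k = j}
  · simp_rw [hprod, hab, mul_comm]
  · obtain ⟨j, hj⟩ := not_forall.mp hab
    simp [apply_eq_zero_of_card_fiber_ne hX hj]

theorem commute_tensorPow_of_isHermitian
    (hX : ∀ U ∈ unitaryGroup n ℂ, Commute (tensorPow m U) X) {A : Matrix n n ℂ}
    (hA : A.IsHermitian) : Commute (tensorPow m A) X := by
  rw [hA.spectral_theorem, Unitary.conjStarAlgAut_apply, tensorPow_mul, tensorPow_mul]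
  exact ((hX _ hA.eigenvectorUnitary.2).mul_left (commute_tensorPow_diagonal hX _)).mul_left
    (hX _ (star hA.eigenvectorUnitary).2)

open Polynomial in
theorem commute_tensorPow_add_smul_of_forall_real (B C : Matrix n n ℂ)
    (h : ∀ t : ℝ, Commute (tensorPow m (B + (t : ℂ) • C)) X) (z : ℂ) :
    Commute (tensorPow m (B + z • C)) X := by
  let M : Matrix n n ℂ[X] := B.map Polynomial.C + (Polynomial.X : ℂ[X]) • C.map Polynomial.C
  let P := tensorPow m M * X.map Polynomial.C - X.map Polynomial.C * tensorPow m M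
  have hP (w : ℂ) : (evalRingHom w).mapMatrix P =
      tensorPow m (B + w • C) * X - X * tensorPow m (B + w • C) := by
    have hM : M.map (evalRingHom w) = B + w • C := by
      ext
      simp [M]
      ring
    have hX : (X.map Polynomial.C).map (evalRingHom w) = X := by
      ext
      simp only [map_apply, coe_evalRingHom, eval_C]
    simp only [P, map_sub, map_mul, RingHom.mapMatrix_apply, tensorPow_map, hM, hX]
  have hP0 : P = 0 := by
    refine Matrix.ext fun a b => eq_zero_of_infinite_isRoot _ ?_
    refine (Set.infinite_range_of_injective Complex.ofReal_injective).mono ?_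
    rintro _ ⟨t, rfl⟩
    have := congr_fun₂ (hP t) a b
    rw [(h t).eq, sub_self] at this
    simpa using this
  refine sub_eq_zero.mp ?_
  rw [← hP z, hP0, map_zero]

theorem commute_tensorPow_of_forall_unitary
    (hX : ∀ U ∈ unitaryGroup n ℂ, Commute (tensorPow m U) X) (A : Matrix n n ℂ) :
    Commute (tensorPow m A) X := by
  set B := (2⁻¹ : ℂ) • (A + Aᴴ)
  set C := (Complex.I / 2) • (A - Aᴴ)
  have hA : A = B + (-Complex.I) • C := by
    simp only [B, C, smul_smul, smul_add, smul_sub]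
    rw [show -Complex.I * (Complex.I / 2) = 2⁻¹ by ring_nf; norm_num]
    module
  have hB : Bᴴ = B := by simp [B, add_comm]
  have hC : Cᴴ = C := by
    simp [C]
    module
  rw [hA]
  refine commute_tensorPow_add_smul_of_forall_real B C (fun t => ?_) _
  refine commute_tensorPow_of_isHermitian hX ?_
  simp [IsHermitian, hB, hC]

theorem eq_zero_of_apply_comp_perm_eq_zero (e : Fin m ↪ n)
    (hX : ∀ U ∈ unitaryGroup n ℂ, Commute (tensorPow m U) X)
    (h0 : ∀ σ : Equiv.Perm (Fin m), X e (e ∘ σ) = 0) : X = 0 := by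
  have hrow (c : Fin m → n) : X e c = 0 := by
    by_cases hce : ∀ j, #{k | c k = j} = #{k | e k = j}
    · obtain ⟨σ, rfl⟩ := e.exists_perm_eq_comp_of_card_fiber_eq c hce
      exact h0 σ
    · obtain ⟨j, hj⟩ := not_forall.mp hce
      exact apply_eq_zero_of_card_fiber_ne hX (Ne.symm hj)
  ext b w
  -- with `F` the 0/1 matrix of a map `f` extending `b`,
  -- `X b w = (F^{⊗m} * X) e w = (X * F^{⊗m}) e w`, which vanishes with row `e` of `X`
  set f : n → n := Function.extend e b id
  have hf : f ∘ e = b := funext (e.injective.extend_apply b id)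
  have key := congr_fun₂ (commute_tensorPow_of_forall_unitary hX
    ((1 : Matrix n n ℂ).submatrix f id)).eq e w
  simpa [tensorPow_submatrix, tensorPow_one, mul_apply, hrow, hf, one_apply] using key

theorem finrank_centralizer_tensorPow_unitaryGroup (hm : m ≤ Fintype.card n) :
    Module.finrank ℂ (Subalgebra.centralizer ℂ
      (Set.range ((tensorPowHom m).comp (unitaryGroup n ℂ).subtype))) = m.factorial := by
  obtain ⟨e⟩ := Function.Embedding.nonempty_of_card_le (α := Fin m) (β := n) (by simpa using hm)
  set S := Subalgebra.centralizer ℂ (Set.range ((tensorPowHom m).comp (unitaryGroup n ℂ).subtype))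
  have hmem {X} : X ∈ S ↔ ∀ U ∈ unitaryGroup n ℂ, Commute (tensorPow m U) X := by
    simp [S, Subalgebra.mem_centralizer_iff, Commute, SemiconjBy, tensorPowHom]
  let Φ : S →ₗ[ℂ] Equiv.Perm (Fin m) → ℂ :=
    { toFun X σ := X.1 e (e ∘ σ)
      map_add' _ _ := rfl
      map_smul' _ _ := rfl }
  let P (π : Equiv.Perm (Fin m)) : S :=
    ⟨Equiv.Perm.permMatrix ℂ (Equiv.arrowCongr π.symm (Equiv.refl n)),
      hmem.mpr fun U _ => commute_tensorPow_permMatrix U π⟩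
  have hΦP (π : Equiv.Perm (Fin m)) : Φ (P π) = Pi.basisFun ℂ _ π := by
    ext σ
    rw [Pi.basisFun_apply]
    change Equiv.Perm.permMatrix ℂ (Equiv.arrowCongr π.symm (Equiv.refl n)) ⇑e (⇑e ∘ ⇑σ) =
      Pi.single (M := fun _ => ℂ) π 1 σ
    have hπσ : ⇑e ∘ ⇑π = ⇑e ∘ ⇑σ ↔ σ = π := by
      rw [e.injective.comp_left.eq_iff, DFunLike.coe_fn_eq, eq_comm]
    simp only [Equiv.Perm.permMatrix, PEquiv.toMatrix_apply, Equiv.toPEquiv_apply, Option.mem_def,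
      Option.some.injEq, Pi.single_apply]
    rw [show Equiv.arrowCongr π.symm (Equiv.refl n) e = e ∘ π from rfl]
    exact if_congr hπσ rfl rfl
  have hΦ : Function.Injective Φ := by
    refine (injective_iff_map_eq_zero Φ).mpr fun X hX => Subtype.ext ?_
    exact eq_zero_of_apply_comp_perm_eq_zero e (hmem.mp X.2) (congr_fun hX)
  have hP : LinearIndependent ℂ P := by
    refine LinearIndependent.of_comp Φ ?_
    rw [show ⇑Φ ∘ P = Pi.basisFun ℂ _ from funext hΦP]
    exact (Pi.basisFun ℂ _).linearIndependent
  apply le_antisymm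
  · simpa [Fintype.card_perm] using LinearMap.finrank_le_finrank_of_injective hΦ
  · simpa [Fintype.card_perm] using hP.fintype_card_le_finrank

end Commutant

section HaarAverage

variable {G ι : Type*} [Group G] [Fintype ι] [DecidableEq ι]

noncomputable def invariants (ρ : G →* Matrix ι ι ℂ) : Submodule ℂ (ι → ℂ) :=
  Representation.invariants ((toLinAlgEquiv' : Matrix ι ι ℂ ≃ₐ[ℂ] _).toMonoidHom.comp ρ)

theorem mem_invariants {ρ : G →* Matrix ι ι ℂ} {v : ι → ℂ} :
    v ∈ invariants ρ ↔ ∀ g, ρ g *ᵥ v = v := Iff.rfl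

variable [MeasurableSpace G] (μ : Measure G) (ρ : G →* Matrix ι ι ℂ)

noncomputable def haarAverage : Matrix ι ι ℂ := of fun i j => ∫ g, ρ g i j ∂μ

variable {μ ρ} (hρ : ∀ i j, Integrable (fun g => ρ g i j) μ)
include hρ

theorem mul_haarAverage_eq_integral (M : Matrix ι ι ℂ) :
    M * haarAverage μ ρ = of fun i j => ∫ g, (M * ρ g) i j ∂μ := by
  ext i j
  simp only [haarAverage, mul_apply, of_apply]
  rw [integral_finsetSum _ fun k _ => (hρ k j).const_mul _]
  simp_rw [integral_const_mul]

theorem haarAverage_mulVec_eq_integral (v : ι → ℂ) :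
    haarAverage μ ρ *ᵥ v = fun i => ∫ g, (ρ g *ᵥ v) i ∂μ := by
  ext i
  simp only [haarAverage, mulVec, dotProduct, of_apply]
  rw [integral_finsetSum _ fun k _ => (hρ i k).mul_const _]
  simp_rw [integral_mul_const]

variable [MeasurableMul G] [μ.IsMulLeftInvariant]

theorem apply_mul_haarAverage (g : G) : ρ g * haarAverage μ ρ = haarAverage μ ρ := by
  rw [mul_haarAverage_eq_integral hρ]
  ext i j
  simp_rw [of_apply, ← map_mul]
  exact integral_mul_left_eq_self (fun h => ρ h i j) g

variable [IsProbabilityMeasure μ]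

theorem isProj_haarAverage : LinearMap.IsProj (invariants ρ) (toLin' (haarAverage μ ρ)) where
  map_mem v := mem_invariants.mpr fun g => by
    rw [toLin'_apply, mulVec_mulVec, apply_mul_haarAverage hρ]
  map_id v hv := by
    rw [toLin'_apply, haarAverage_mulVec_eq_integral hρ]
    ext i
    simp [mem_invariants.mp hv]

theorem integral_trace_eq_finrank_invariants :
    ∫ g, trace (ρ g) ∂μ = Module.finrank ℂ (invariants ρ) := by
  have htrace : trace (haarAverage μ ρ) = ∫ g, trace (ρ g) ∂μ :=
    (integral_finsetSum _ fun i _ => hρ i i).symm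
  rw [← htrace, ← (isProj_haarAverage hρ).trace,
    LinearMap.trace_eq_matrix_trace ℂ (Pi.basisFun ℂ ι), LinearMap.toMatrix_eq_toMatrix',
    LinearMap.toMatrix'_toLin']

end HaarAverage

section ConjKronecker

variable {G n : Type*} [Fintype n] [DecidableEq n]

def conjKroneckerHom [Monoid G] (T : G →* Matrix n n ℂ) : G →* Matrix (n × n) (n × n) ℂ where
  toFun g := (T g).map (starRingEnd ℂ) ⊗ₖ T g
  map_one' := by simp
  map_mul' g h := by rw [map_mul, Matrix.map_mul, mul_kronecker_mul]

@[simp]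
theorem conjKroneckerHom_apply [Monoid G] (T : G →* Matrix n n ℂ) (g : G) (p q : n × n) :
    conjKroneckerHom T g p q = starRingEnd ℂ (T g p.1 q.1) * T g p.2 q.2 := rfl

theorem conjKroneckerHom_mulVec_vec [Monoid G] (T : G →* Matrix n n ℂ) (g : G)
    (X : Matrix n n ℂ) : conjKroneckerHom T g *ᵥ vec X = vec (T g * X * (T g)ᴴ) :=
  kronecker_mulVec_vec _ _ _

theorem trace_conjKroneckerHom [Monoid G] (T : G →* Matrix n n ℂ) (g : G) :
    trace (conjKroneckerHom T g) = (‖trace (T g)‖ ^ 2 : ℝ) := by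
  simp [conjKroneckerHom, trace_kronecker, ← AddMonoidHom.map_trace, Complex.conj_mul']

theorem finrank_invariants_conjKroneckerHom [Group G] {T : G →* Matrix n n ℂ}
    (hT : ∀ g, T g ∈ unitaryGroup n ℂ) :
    Module.finrank ℂ (invariants (conjKroneckerHom T)) =
      Module.finrank ℂ (Subalgebra.centralizer ℂ (Set.range T)) := by
  let E : Matrix n n ℂ ≃ₗ[ℂ] (n × n → ℂ) := LinearEquiv.ofBijective
    { toFun := vec, map_add' := vec_add, map_smul' := vec_smul } vec_bijective
  have hE : (Subalgebra.centralizer ℂ (Set.range T)).toSubmodule.map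
      (E : Matrix n n ℂ →ₗ[ℂ] n × n → ℂ) = invariants (conjKroneckerHom T) := by
    ext v
    obtain ⟨X, rfl⟩ := E.surjective v
    rw [Submodule.mem_map_equiv, LinearEquiv.symm_apply_apply, Subalgebra.mem_toSubmodule,
      Subalgebra.mem_centralizer_iff, mem_invariants, Set.forall_mem_range]
    refine forall_congr' fun g => ?_
    rw [← commute_iff_eq, commute_unitary_iff_star_right_conjugate (hT g), ← vec_inj,
      star_eq_conjTranspose, ← conjKroneckerHom_mulVec_vec]
    rfl
  rw [← hE, LinearEquiv.finrank_map_eq, Subalgebra.finrank_toSubmodule]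

end ConjKronecker

theorem integral_norm_trace_sq_eq_finrank_centralizer {G n : Type*} [Group G] [MeasurableSpace G]
    [MeasurableMul G] [Fintype n] [DecidableEq n] (μ : Measure G) [IsProbabilityMeasure μ]
    [μ.IsMulLeftInvariant] {T : G →* Matrix n n ℂ} (hT : ∀ g, T g ∈ unitaryGroup n ℂ)
    (hT_meas : ∀ i j, Measurable fun g => T g i j) :
    ∫ g, ‖trace (T g)‖ ^ 2 ∂μ = Module.finrank ℂ (Subalgebra.centralizer ℂ (Set.range T)) := by
  have hρ (p q : n × n) : Integrable (fun g => conjKroneckerHom T g p q) μ := by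
    refine Integrable.of_bound (((Complex.continuous_conj.measurable.comp (hT_meas p.1 q.1)).mul
      (hT_meas p.2 q.2)).aestronglyMeasurable) 1 (Eventually.of_forall fun g => ?_)
    simpa using mul_le_one₀ (entry_norm_bound_of_unitary (hT g) p.1 q.1) (norm_nonneg _)
      (entry_norm_bound_of_unitary (hT g) p.2 q.2)
  have h := integral_trace_eq_finrank_invariants hρ
  simp_rw [trace_conjKroneckerHom, integral_complex_ofReal,
    finrank_invariants_conjKroneckerHom hT] at h
  exact_mod_cast h

end Matrix

-- `matMS` is the Borel σ-algebra; this gives `MeasurableMul` on the unitary group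
instance (N : ℕ) : BorelSpace (Matrix (Fin N) (Fin N) ℂ) :=
  inferInstanceAs (BorelSpace (Fin N → Fin N → ℂ))

theorem statement12_general (N : ℕ) (m : ℕ) (hm : m ≤ N)
    (μ : Measure (Matrix.unitaryGroup (Fin N) ℂ))
    (hHaar : μ.IsHaarMeasure) (hprob : IsProbabilityMeasure μ) :
    ∫ U, ‖Matrix.trace ((U : Matrix (Fin N) (Fin N) ℂ))‖ ^ (2 * m) ∂μ
      = (Nat.factorial m : ℝ) := by
  set T := (tensorPowHom m).comp (unitaryGroup (Fin N) ℂ).subtype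
  have hT (U : unitaryGroup (Fin N) ℂ) : T U = tensorPow m (U : Matrix (Fin N) (Fin N) ℂ) := rfl
  have hT_unitary (U : unitaryGroup (Fin N) ℂ) : T U ∈ unitaryGroup (Fin m → Fin N) ℂ :=
    tensorPow_mem_unitaryGroup U.2
  have hT_meas (a b : Fin m → Fin N) : Measurable fun U => T U a b := by
    simp only [hT, tensorPow_apply]
    exact Finset.measurable_prod _ fun k _ =>
      (measurable_pi_apply _).comp ((measurable_pi_apply _).comp measurable_subtype_coe)
  have h := integral_norm_trace_sq_eq_finrank_centralizer μ hT_unitary hT_meas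
  rw [finrank_centralizer_tensorPow_unitaryGroup (by simpa using hm)] at h
  simpa only [hT, trace_tensorPow, norm_pow, ← pow_mul'] using h

/-- Diaconis–Shahshahani: for `0 ≤ m ≤ N`,
`∫_{U(N)} |tr U|^{2m} dμ_H = m!`. -/
theorem statement12 (N : ℕ) (hN : 1 ≤ N) (m : ℕ) (hm : m ≤ N)
    (μ : Measure (Matrix.unitaryGroup (Fin N) ℂ))
    (hHaar : μ.IsHaarMeasure) (hprob : IsProbabilityMeasure μ) :
    ∫ U, ‖Matrix.trace ((U : Matrix (Fin N) (Fin N) ℂ))‖ ^ (2 * m) ∂μ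
      = (Nat.factorial m : ℝ) :=
  statement12_general N m hm μ hHaar hprob
end

section
/- Let μ be a partition of a positive integer m and let N be an integer with N ≥ m + 1. Then ∏_{k=0}^{m−1} (N − k) ≤ ∏_{(i,j) ∈ Y(μ)} (N − i + j) ≤ ∏_{k=0}^{m−1} (N + k), where the middle product runs over all cells of the Young diagram of μ; the lower bound is attained by the column partition (1^m) and the upper bound by the row partition (m). -/
/-!
Read the cells of the Young diagram row by row and number them `0, 1, …, m - 1`. The cell
`(i, j)` gets the number `k = sᵢ + (j - 1)`, where `sᵢ = μ₁ + ⋯ + μᵢ₋₁ ≥ i - 1` counts the cells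
of the earlier rows. Hence its content `j - i` lies between `-k` and `k`, and the two bounds hold
factor by factor.
-/

open Finset

lemma prod_Icc_one_eq_prod_range {M : Type*} [CommMonoid M] (g : ℕ → M) (L : ℕ) :
    ∏ j ∈ Icc 1 L, g j = ∏ t ∈ range L, g (t + 1) := by
  rw [range_eq_Ico, prod_Ico_add' g 0 L 1]
  rfl

lemma prod_range_sum_eq_prod_prod_range {M : Type*} [CommMonoid M] {ℓ : ℕ} (lam : Fin ℓ → ℕ)
    (f : ℕ → M) :
    ∏ k ∈ range (∑ i, lam i), f k = ∏ i, ∏ t ∈ range (lam i), f (∑ j ∈ Iio i, lam j + t) := by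
  induction ℓ with
  | zero => simp
  | succ n ih =>
    rw [Fin.sum_univ_castSucc, prod_range_add, Fin.prod_univ_castSucc, ih]
    simp only [Fin.sum_Iio_castSucc, Fin.Iio_last_eq_map, sum_map, Fin.coe_castSuccEmb]

lemma card_le_sum_Iio {ℓ : ℕ} {lam : Fin ℓ → ℕ} (hpos : ∀ i, 0 < lam i) (i : Fin ℓ) :
    (i : ℕ) ≤ ∑ j ∈ Iio i, lam j := by
  simpa using card_nsmul_le_sum (Iio i) lam 1 fun j _ => hpos j

lemma prod_range_sub_le_prod_Young {ℓ : ℕ} {lam : Fin ℓ → ℕ} (hpos : ∀ i, 0 < lam i) (N : ℕ) :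
    ∏ k ∈ range (∑ i, lam i), (N - k) ≤
      ∏ i : Fin ℓ, ∏ j ∈ Icc 1 (lam i), (N + j - (i.val + 1)) := by
  rw [prod_range_sum_eq_prod_prod_range]
  refine prod_le_prod' fun i _ => ?_
  rw [prod_Icc_one_eq_prod_range]
  have hi := card_le_sum_Iio hpos i
  exact prod_le_prod' fun t _ => by omega

lemma prod_Young_le_prod_range_add {ℓ : ℕ} (lam : Fin ℓ → ℕ) (N : ℕ) :
    ∏ i : Fin ℓ, ∏ j ∈ Icc 1 (lam i), (N + j - (i.val + 1)) ≤
      ∏ k ∈ range (∑ i, lam i), (N + k) := by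
  rw [prod_range_sum_eq_prod_prod_range]
  refine prod_le_prod' fun i _ => ?_
  rw [prod_Icc_one_eq_prod_range]
  exact prod_le_prod' fun t _ => by omega

theorem statement16_general (m : ℕ) (ℓ : ℕ) (lam : Fin ℓ → ℕ)
    (hpos : ∀ i, 0 < lam i)
    (hsum : ∑ i, lam i = m)
    (N : ℕ) :
    ((∏ k ∈ Finset.range m, (N - k)) ≤
        ∏ i : Fin ℓ, ∏ j ∈ Finset.Icc 1 (lam i), (N + j - (i.val + 1)) ∧
      (∏ i : Fin ℓ, ∏ j ∈ Finset.Icc 1 (lam i), (N + j - (i.val + 1))) ≤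
        ∏ k ∈ Finset.range m, (N + k)) ∧
    (∏ i : Fin m, ∏ j ∈ Finset.Icc 1 ((fun _ : Fin m => 1) i), (N + j - (i.val + 1)))
        = ∏ k ∈ Finset.range m, (N - k) ∧
    (∏ i : Fin 1, ∏ j ∈ Finset.Icc 1 ((fun _ : Fin 1 => m) i), (N + j - (i.val + 1)))
        = ∏ k ∈ Finset.range m, (N + k) := by
  subst hsum
  refine ⟨⟨prod_range_sub_le_prod_Young hpos N, prod_Young_le_prod_range_add lam N⟩, ?_, ?_⟩
  · simp [← Fin.prod_univ_eq_prod_range]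
  · simp [prod_Icc_one_eq_prod_range]

/-- inequality (44) of the paper: for a partition `μ ⊢ m` and
`N ≥ m + 1`, the product of `N + (content)` over the cells of the Young diagram of `μ`
is between `∏_{k<m} (N-k)` and `∏_{k<m} (N+k)`; the lower bound is attained by the
column partition `(1^m)` and the upper bound by the row partition `(m)`. Here the
partition is given by its parts `lam 0 ≥ lam 1 ≥ ⋯ > 0` summing to `m`, rows are
indexed `1,…,ℓ` and columns `1,…,lam i`, and the cell `(i,j)` contributes `N - i + j`. -/
theorem statement16 (m : ℕ) (hm : 0 < m) (ℓ : ℕ) (lam : Fin ℓ → ℕ)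
    (hpos : ∀ i, 0 < lam i)
    (hmono : ∀ i j : Fin ℓ, i ≤ j → lam j ≤ lam i)
    (hsum : ∑ i, lam i = m)
    (N : ℕ) (hN : m + 1 ≤ N) :
    ((∏ k ∈ Finset.range m, (N - k)) ≤
        ∏ i : Fin ℓ, ∏ j ∈ Finset.Icc 1 (lam i), (N + j - (i.val + 1)) ∧
      (∏ i : Fin ℓ, ∏ j ∈ Finset.Icc 1 (lam i), (N + j - (i.val + 1))) ≤
        ∏ k ∈ Finset.range m, (N + k)) ∧
    (∏ i : Fin m, ∏ j ∈ Finset.Icc 1 ((fun _ : Fin m => 1) i), (N + j - (i.val + 1)))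
        = ∏ k ∈ Finset.range m, (N - k) ∧
    (∏ i : Fin 1, ∏ j ∈ Finset.Icc 1 ((fun _ : Fin 1 => m) i), (N + j - (i.val + 1)))
        = ∏ k ∈ Finset.range m, (N + k) :=
  statement16_general m ℓ lam hpos hsum N
end
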